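/- Let G be a connected graph of order n ≥ 2, H a connected non-bipartite non-complete graph of order n′, and v ∈ V(H). Then dim_l(G∘_v H) ≤ n(n′−3). -/

import Mathlib

/-!
Pick a set `R = {v, a, b}` of three vertices of `H` in which adjacent vertices lie at
different distances from the root `v`; since `H` is not complete such `a, b` exist. The
vertices of all copies of `H` outside `R` form a local metric generator of size `n(n' - 3)`.
An edge with an endpoint in the generator is resolved by that endpoint. An edge inside a copy
between two vertices of `R` is resolved by a generator vertex in another copy (here `n ≥ 2`),
whose distance to `(g, x)` is `d_H(x, v)` plus a constant. An edge `(g, v)(g', v)` of the base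
graph is resolved by a generator vertex in the copy of `g`. The generator is nonempty because
a graph that is neither bipartite nor complete has at least four vertices. The lower bounds on
distances in the rooted product come from integer potentials that change by at most one along
each edge.
-/

open SimpleGraph

/-- A set `S` is a local metric generator for `G` if every pair of adjacent
vertices is distinguished, by distance, by some element of `S`. -/
def IsLocalMetricGenerator {V : Type*} (G : SimpleGraph V) (S : Set V) : Prop :=
  ∀ ⦃u v : V⦄, G.Adj u v → ∃ w ∈ S, G.dist u w ≠ G.dist v w

/-- The local metric dimension of a graph. -/
noncomputable def localMetricDim {V : Type*} [Fintype V] (G : SimpleGraph V) : ℕ :=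
  sInf {k | ∃ S : Finset V, IsLocalMetricGenerator G ↑S ∧ S.card = k}

/-- A local metric basis: a local metric generator of minimum cardinality. -/
def IsLocalMetricBasis {V : Type*} [Fintype V] (G : SimpleGraph V) (S : Finset V) : Prop :=
  IsLocalMetricGenerator G ↑S ∧ S.card = localMetricDim G

/-- The rooted product G ∘_v H: a copy of H is attached at its root v to each
vertex of G. Vertex (g, v) plays the role of the g-th vertex of G. -/
def rootedProd {V W : Type*} (G : SimpleGraph V) (H : SimpleGraph W) (v : W) :
    SimpleGraph (V × W) :=
  SimpleGraph.fromRel (fun a b =>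
    (a.1 = b.1 ∧ H.Adj a.2 b.2) ∨ (a.2 = v ∧ b.2 = v ∧ G.Adj a.1 b.1))

open Finset

namespace SimpleGraph

variable {α β : Type*} {R : SimpleGraph α} {R' : SimpleGraph β}

theorem Adj.dist_le_dist_add_one {v w : α} (h : R.Adj v w) (u : α) :
    R.dist v u ≤ R.dist w u + 1 := by
  rw [dist_comm, dist_comm (u := w)]
  rcases h.symm.diff_dist_adj (u := u) with h | h | h <;> omega

theorem Walk.sub_le_length (f : α → ℤ) (hf : ∀ a b, R.Adj a b → f a ≤ f b + 1) {p q : α}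
    (w : R.Walk p q) : f p - f q ≤ w.length := by
  induction w with
  | nil => simp
  | cons h _ ih =>
    have := hf _ _ h
    push_cast [Walk.length_cons]
    linarith

theorem Reachable.sub_le_dist (f : α → ℤ) (hf : ∀ a b, R.Adj a b → f a ≤ f b + 1) {p q : α}
    (h : R.Reachable p q) : f p - f q ≤ R.dist p q := by
  obtain ⟨w, hw⟩ := h.exists_walk_length_eq_dist
  exact hw ▸ w.sub_le_length f hf

theorem Reachable.dist_map_le (φ : α → β)
    (hφ : ∀ a b, R.Adj a b → φ a = φ b ∨ R'.Adj (φ a) (φ b)) {p q : α} (h : R.Reachable p q) :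
    R'.dist (φ p) (φ q) ≤ R.dist p q := by
  have key := h.sub_le_dist (fun a => (R'.dist (φ a) (φ q) : ℤ)) fun a b hab => by
    rcases hφ a b hab with heq | hadj
    · simp [heq]
    · exact_mod_cast hadj.dist_le_dist_add_one (φ q)
  simp only [dist_self, Nat.cast_zero, sub_zero] at key
  exact_mod_cast key

end SimpleGraph

open SimpleGraph

theorem localMetricDim_le_card {V : Type*} [Fintype V] {G : SimpleGraph V} {S : Finset V}
    (h : IsLocalMetricGenerator G S) : localMetricDim G ≤ S.card :=
  Nat.sInf_le ⟨S, h, rfl⟩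

theorem isLocalMetricGenerator_of_forall_adj_notMem {V : Type*} {G : SimpleGraph V} {S : Set V}
    (h : ∀ ⦃u w⦄, G.Adj u w → u ∉ S → w ∉ S → ∃ s ∈ S, G.dist u s ≠ G.dist w s) :
    IsLocalMetricGenerator G S := by
  intro u w huw
  by_cases hu : u ∈ S
  · exact ⟨u, hu, by simp [dist_eq_one_iff_adj.mpr huw.symm]⟩
  by_cases hw : w ∈ S
  · exact ⟨w, hw, by simp [dist_eq_one_iff_adj.mpr huw]⟩
  exact h huw hu hw

section rootedProd

variable {V W : Type*} {G : SimpleGraph V} {H : SimpleGraph W} {v : W}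

@[simp]
theorem rootedProd_adj {p q : V × W} :
    (rootedProd G H v).Adj p q ↔
      (p.1 = q.1 ∧ H.Adj p.2 q.2) ∨ (p.2 = v ∧ q.2 = v ∧ G.Adj p.1 q.1) := by
  simp only [rootedProd, fromRel_adj]
  constructor
  · rintro ⟨-, (h | h) | (⟨h1, h2⟩ | ⟨h1, h2, h3⟩)⟩
    · exact .inl h
    · exact .inr h
    · exact .inl ⟨h1.symm, h2.symm⟩
    · exact .inr ⟨h2, h1, h3.symm⟩
  · rintro (⟨h1, h2⟩ | ⟨h1, h2, h3⟩)
    · exact ⟨fun h => h2.ne (by rw [h]), .inl (.inl ⟨h1, h2⟩)⟩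
    · exact ⟨fun h => h3.ne (by rw [h]), .inl (.inr ⟨h1, h2, h3⟩)⟩

theorem rootedProd_reachable_copy (g : V) {x y : W} (h : H.Reachable x y) :
    (rootedProd G H v).Reachable (g, x) (g, y) :=
  h.map ⟨fun z => (g, z), fun h => rootedProd_adj.mpr (.inl ⟨rfl, h⟩)⟩

theorem rootedProd_reachable_root {g g' : V} (h : G.Reachable g g') :
    (rootedProd G H v).Reachable (g, v) (g', v) :=
  h.map ⟨fun g => (g, v), fun h => rootedProd_adj.mpr (.inr ⟨rfl, rfl, h⟩)⟩

theorem rootedProd_connected (hG : G.Connected) (hH : H.Connected) :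
    (rootedProd G H v).Connected := by
  have := hG.nonempty
  have := hH.nonempty
  refine ⟨fun ⟨g, x⟩ ⟨g', y⟩ => ?_⟩
  exact ((rootedProd_reachable_copy g (hH x v)).trans
    (rootedProd_reachable_root (hG g g'))).trans (rootedProd_reachable_copy g' (hH v y))

theorem rootedProd_dist_same_copy (hG : G.Connected) (hH : H.Connected) (g : V) (x y : W) :
    (rootedProd G H v).dist (g, x) (g, y) = H.dist x y := by
  classical
  refine le_antisymm ?_ ?_
  · exact (hH x y).dist_map_le (fun z => (g, z))
      fun _ _ h => .inr (rootedProd_adj.mpr (.inl ⟨rfl, h⟩))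
  · -- retract every other copy of `H` onto the root `v`
    have := ((rootedProd_connected (v := v) hG hH).preconnected (g, x) (g, y)).dist_map_le
      (R' := H) (fun p => if p.1 = g then p.2 else v) ?_
    · simpa using this
    rintro ⟨h, z⟩ ⟨h', z'⟩ hadj
    simp only [rootedProd_adj] at hadj
    rcases hadj with ⟨rfl, hzz⟩ | ⟨rfl, rfl, -⟩
    · by_cases hh : h = g <;> simp [hh, hzz]
    · simp

theorem rootedProd_dist_of_ne (hG : G.Connected) (hH : H.Connected) {g g' : V} (hgg : g ≠ g')
    (x y : W) :
    (rootedProd G H v).dist (g, x) (g', y) = H.dist x v + G.dist g g' + H.dist v y := by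
  classical
  have hP := rootedProd_connected (v := v) hG hH
  refine le_antisymm ?_ ?_
  · have h₁ := hP.dist_triangle (u := (g, x)) (v := (g, v)) (w := (g', y))
    have h₂ := hP.dist_triangle (u := (g, v)) (v := (g', v)) (w := (g', y))
    have h₃ := (rootedProd_dist_same_copy (v := v) hG hH g x v).le
    have h₄ := (rootedProd_dist_same_copy (v := v) hG hH g' v y).le
    have h₅ := (hG g g').dist_map_le (R' := rootedProd G H v) (fun g => (g, v))
      fun _ _ h => .inr (rootedProd_adj.mpr (.inr ⟨rfl, rfl, h⟩))
    omega
  · -- potential: distance to `g'` in `G`, plus (in copy `g`) or minus the height above the root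
    have key := (hP (g, x) (g', y)).sub_le_dist
      (fun p => (G.dist p.1 g' : ℤ) + if p.1 = g then (H.dist p.2 v : ℤ) else -H.dist p.2 v) ?_
    · simp only [hgg.symm, if_true, if_false, SimpleGraph.dist_self, Nat.cast_zero] at key
      rw [dist_comm (u := v)]
      omega
    rintro ⟨h, z⟩ ⟨h', z'⟩ hadj
    simp only [rootedProd_adj] at hadj
    rcases hadj with ⟨rfl, hzz⟩ | ⟨rfl, rfl, hhh⟩
    · have := hzz.dist_le_dist_add_one v
      have := hzz.symm.dist_le_dist_add_one v
      dsimp only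
      split_ifs <;> omega
    · have := hhh.dist_le_dist_add_one g'
      simp only [SimpleGraph.dist_self, Nat.cast_zero, neg_zero, ite_self]
      omega

theorem isLocalMetricGenerator_rootedProd [Nontrivial V] (hG : G.Connected) (hH : H.Connected)
    {T : Set W} (hT : T.Nonempty)
    (hdist : ∀ x y, x ∉ T → y ∉ T → H.Adj x y → H.dist x v ≠ H.dist y v) :
    IsLocalMetricGenerator (rootedProd G H v) (Set.univ ×ˢ T) := by
  obtain ⟨c, hc⟩ := hT
  refine isLocalMetricGenerator_of_forall_adj_notMem ?_
  rintro ⟨g, x⟩ ⟨g', y⟩ hadj hx hy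
  simp only [rootedProd_adj] at hadj
  rcases hadj with ⟨rfl, hxy⟩ | ⟨rfl, rfl, hgg⟩
  · obtain ⟨g'', hg''⟩ := exists_ne g
    refine ⟨(g'', c), ⟨trivial, hc⟩, ?_⟩
    have := hdist x y (by simpa using hx) (by simpa using hy) hxy
    rw [rootedProd_dist_of_ne hG hH hg''.symm, rootedProd_dist_of_ne hG hH hg''.symm]
    omega
  · refine ⟨(g, c), ⟨trivial, hc⟩, ?_⟩
    rw [rootedProd_dist_same_copy hG hH, rootedProd_dist_of_ne hG hH hgg.ne',
      SimpleGraph.dist_self, dist_eq_one_iff_adj.mpr hgg.symm]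
    omega

end rootedProd

section Combinatorics

variable {W : Type*} {H : SimpleGraph W}

theorem four_le_card_of_not_colorable_two_of_ne_top [Fintype W] (hnb : ¬ H.Colorable 2)
    (hnc : H ≠ ⊤) : 4 ≤ Fintype.card W := by
  classical
  obtain ⟨x, y, hxy, hna⟩ := ne_top_iff_exists_not_adj.mp hnc
  -- otherwise colouring `{x, y}` against the rest would be proper
  obtain ⟨a, b, hab, ha, hb⟩ :
      ∃ a b, H.Adj a b ∧ a ∉ ({x, y} : Finset W) ∧ b ∉ ({x, y} : Finset W) := by
    by_contra! h
    have C : H.Coloring Bool := Coloring.mk (fun z => decide (z ∈ ({x, y} : Finset W)))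
      fun {a b} hab hc => by
        by_cases ha : a ∈ ({x, y} : Finset W)
        · have hb : b ∈ ({x, y} : Finset W) := by simpa [ha] using hc
          simp only [mem_insert, mem_singleton] at ha hb
          rcases ha with rfl | rfl <;> rcases hb with rfl | rfl
          exacts [hab.ne rfl, hna hab, hna hab.symm, hab.ne rfl]
        · exact absurd (h a b hab ha) (by simpa [ha] using hc)
    exact hnb (by simpa using C.colorable)
  calc 4 = ({a, b, x, y} : Finset W).card := by
        rw [card_insert_of_notMem fun h => (mem_insert.mp h).elim hab.ne ha,
          card_insert_of_notMem hb, card_pair hxy]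
    _ ≤ Fintype.card W := card_le_univ _

theorem exists_pair_ne_dist_ne_of_adj (hH : H.Connected) (hnc : H ≠ ⊤) (v : W) :
    ∃ a b, a ≠ v ∧ b ≠ v ∧ a ≠ b ∧ (H.Adj a b → H.dist a v ≠ H.dist b v) := by
  obtain ⟨x, y, hxy, hna⟩ := ne_top_iff_exists_not_adj.mp hnc
  by_cases hv : ∀ z, z ≠ v → H.Adj v z
  · have hx : x ≠ v := fun h => hna (h ▸ hv y (h ▸ hxy.symm))
    have hy : y ≠ v := fun h => hna (h ▸ (hv x (h ▸ hxy)).symm)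
    exact ⟨x, y, hx, hy, hxy, fun h => (hna h).elim⟩
  push Not at hv
  obtain ⟨z, hzv, hnz⟩ := hv
  have : Nontrivial W := ⟨⟨z, v, hzv⟩⟩
  obtain ⟨b, hb⟩ := hH.preconnected.exists_adj_of_nontrivial v
  refine ⟨z, b, hzv, hb.ne', fun h => hnz (h ▸ hb), fun _ => ?_⟩
  have := hH.one_lt_dist_of_ne_of_not_adj hzv fun h => hnz h.symm
  rw [dist_eq_one_iff_adj.mpr hb.symm]
  omega

theorem exists_card_eq_three_dist_ne_of_adj [DecidableEq W] (hH : H.Connected) (hnc : H ≠ ⊤)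
    (v : W) :
    ∃ R : Finset W, R.card = 3 ∧ ∀ x ∈ R, ∀ y ∈ R, H.Adj x y → H.dist x v ≠ H.dist y v := by
  obtain ⟨a, b, hav, hbv, hab, hw⟩ := exists_pair_ne_dist_ne_of_adj hH hnc v
  refine ⟨{v, a, b}, card_eq_three.mpr ⟨v, a, b, hav.symm, hbv.symm, hab, rfl⟩, ?_⟩
  have ha := hH.pos_dist_of_ne hav
  have hb := hH.pos_dist_of_ne hbv
  simp only [mem_insert, mem_singleton, forall_eq_or_imp, forall_eq, SimpleGraph.dist_self]
  refine ⟨⟨?_, ?_, ?_⟩, ⟨?_, ?_, ?_⟩, ⟨?_, ?_, ?_⟩⟩ <;> intro hxy <;>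
    first
    | exact (hxy.ne rfl).elim
    | omega
    | exact hw hxy
    | exact (hw hxy.symm).symm

end Combinatorics

/-- If H is connected, non-bipartite and non-complete of order n', then
dim_l(G ∘_v H) ≤ n(n' - 3). -/
theorem localMetricDim_rootedProd_le_of_not_complete {V W : Type*} [Fintype V] [Fintype W]
    (G : SimpleGraph V) (H : SimpleGraph W) (v : W) (hG : G.Connected) (hH : H.Connected)
    (hnb : ¬ H.Colorable 2) (hn : 2 ≤ Fintype.card V) (hnc : H ≠ ⊤) :
    localMetricDim (rootedProd G H v) ≤ Fintype.card V * (Fintype.card W - 3) := by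
  classical
  have : Nontrivial V := Fintype.one_lt_card_iff_nontrivial.mp hn
  obtain ⟨R, hR3, hR⟩ := exists_card_eq_three_dist_ne_of_adj hH hnc v
  have hRc : Rᶜ.card = Fintype.card W - 3 := by rw [card_compl, hR3]
  have hRc_nonempty : (Rᶜ : Finset W).Nonempty := by
    have := four_le_card_of_not_colorable_two_of_ne_top hnb hnc
    exact card_pos.mp (by omega)
  have hgen : IsLocalMetricGenerator (rootedProd G H v) ↑(univ ×ˢ Rᶜ : Finset (V × W)) := by
    rw [coe_product, coe_univ]
    exact isLocalMetricGenerator_rootedProd hG hH (coe_nonempty.mpr hRc_nonempty)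
      fun x y hx hy => hR x (by simpa using hx) y (by simpa using hy)
  calc localMetricDim (rootedProd G H v) ≤ (univ ×ˢ Rᶜ).card := localMetricDim_le_card hgen
    _ = Fintype.card V * (Fintype.card W - 3) := by rw [card_product, card_univ, hRc]
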